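/- Let G be a finite simple connected graph, let u and v be vertices of G, and let a and b be non-negative integers. If N_a[u] ∩ N_b[v] = ∅ and |N_a[u] ∪ N_b[v]| < 2^{a+b+1}, then G is not Class 0, i.e., π(G) > n(G). -/

import Mathlib

/-!
Put one pebble on every vertex outside `N = N_a[u] ∪ N_b[v]` and `2^(a+b+1) - 1` pebbles on `v`;
since `|N| < 2^(a+b+1)` these are at least `n(G)` pebbles. Weigh a pebble on `x` by `2^ℓ(x)` with
`ℓ(x) = min(d(v,x), b+1) + (a - d(u,x))`, except that the first pebble on a vertex outside `N` weighs
nothing. Because the two balls are disjoint, `ℓ` grows by at most one along an edge and not at all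
along an edge leaving a vertex outside `N`, so no pebbling move increases the total weight. The
configuration weighs `2^(a+b+1) - 1` since `ℓ(v) = 0`, while a pebble on `u` alone weighs
`2^ℓ(u) = 2^(a+b+1)`; so `u` cannot be reached and `π(G, u) > n(G)`.
-/

namespace Pebbling

variable {V : Type*}

/-- A single pebbling move on configurations: remove two pebbles from `u`
(which must have at least two) and add one pebble to an adjacent vertex `w`. -/
def Move (G : SimpleGraph V) (C C' : V → ℕ) : Prop := by
  classical
  exact ∃ u w, G.Adj u w ∧ 2 ≤ C u ∧
    C' = Function.update (Function.update C u (C u - 2)) w (C w + 1)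

/-- A configuration `C` is `r`-solvable if some finite sequence of pebbling moves
starting from `C` produces a configuration with at least one pebble on `r`. -/
def Solvable (G : SimpleGraph V) (C : V → ℕ) (r : V) : Prop :=
  ∃ C', Relation.ReflTransGen (Move G) C C' ∧ 1 ≤ C' r

/-- The pebbling number `π(G, r)`: the least `t` such that every configuration of
size `t` is `r`-solvable. -/
noncomputable def pebblingNumberTo [Fintype V] (G : SimpleGraph V) (r : V) : ℕ :=
  sInf {t | ∀ C : V → ℕ, ∑ x, C x = t → Solvable G C r}

/-- The pebbling number `π(G)`: the maximum of `π(G, r)` over all vertices `r`. -/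
noncomputable def pebblingNumber [Fintype V] (G : SimpleGraph V) : ℕ :=
  Finset.univ.sup fun r => pebblingNumberTo G r

/-- A proper `n`-edge-coloring: a coloring of the edges with `n` colors such that
distinct edges sharing an endpoint receive different colors. -/
def HasProperEdgeColoring (G : SimpleGraph V) (n : ℕ) : Prop :=
  ∃ c : Sym2 V → Fin n, ∀ e₁ ∈ G.edgeSet, ∀ e₂ ∈ G.edgeSet,
    e₁ ≠ e₂ → (∃ x, x ∈ e₁ ∧ x ∈ e₂) → c e₁ ≠ c e₂

/-- A snark: a connected bridgeless cubic simple graph admitting no proper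
3-edge-coloring. -/
def IsSnark [Fintype V] (G : SimpleGraph V) [DecidableRel G.Adj] : Prop :=
  G.Connected ∧ (∀ v, G.degree v = 3) ∧ (∀ e, ¬ G.IsBridge e) ∧
    ¬ HasProperEdgeColoring G 3

section Basic

variable {G : SimpleGraph V} {C C' D : V → ℕ} {r : V}

open Classical in
theorem move_iff : Move G C C' ↔ ∃ z x, G.Adj z x ∧ 2 ≤ C z ∧
    C' = Function.update (Function.update C z (C z - 2)) x (C x + 1) := Iff.rfl

theorem Move.exists_le (h : Move G C C') (hle : C ≤ D) : ∃ D', Move G D D' ∧ C' ≤ D' := by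
  classical
  obtain ⟨z, x, hadj, hz, rfl⟩ := move_iff.mp h
  refine ⟨_, move_iff.mpr ⟨z, x, hadj, hz.trans (hle z), rfl⟩, fun y => ?_⟩
  simp only [Function.update_apply]
  split_ifs
  · exact Nat.add_le_add_right (hle x) 1
  · exact Nat.sub_le_sub_right (hle z) 2
  · exact hle y

theorem Solvable.mono (h : Solvable G C r) (hle : C ≤ D) : Solvable G D r := by
  obtain ⟨C', hsteps, hr⟩ := h
  induction hsteps using Relation.ReflTransGen.head_induction_on generalizing D with
  | refl => exact ⟨D, .refl, hr.trans (hle r)⟩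
  | head hmove _ ih =>
    obtain ⟨D', hmove', hle'⟩ := hmove.exists_le hle
    obtain ⟨D'', hsteps, hD''⟩ := ih hle'
    exact ⟨D'', .head hmove' hsteps, hD''⟩

theorem Solvable.of_reflTransGen (h : Relation.ReflTransGen (Move G) C C')
    (hs : Solvable G C' r) : Solvable G C r :=
  let ⟨C'', hsteps, hr⟩ := hs
  ⟨C'', h.trans hsteps, hr⟩

theorem exists_reflTransGen_add_le {z x : V} (hadj : G.Adj z x) (m : ℕ) (hm : 2 * m ≤ C z) :
    ∃ C', Relation.ReflTransGen (Move G) C C' ∧ C x + m ≤ C' x := by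
  classical
  induction m generalizing C with
  | zero => exact ⟨C, .refl, le_rfl⟩
  | succ m ih =>
    set C₁ := Function.update (Function.update C z (C z - 2)) x (C x + 1)
    have hC₁z : C₁ z = C z - 2 := by simp [C₁, hadj.ne]
    obtain ⟨C', hsteps, hC'⟩ := ih (C := C₁) (by omega)
    refine ⟨C', .head (move_iff.mpr ⟨z, x, hadj, by omega, rfl⟩) hsteps, ?_⟩
    simp only [C₁, Function.update_self] at hC'
    omega

theorem solvable_of_walk {x : V} (p : G.Walk x r) (hC : 2 ^ p.length ≤ C x) :
    Solvable G C r := by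
  induction p generalizing C with
  | nil => exact ⟨C, .refl, Nat.one_le_two_pow.trans hC⟩
  | cons hadj p ih =>
    rw [SimpleGraph.Walk.length_cons, pow_succ] at hC
    obtain ⟨C', hsteps, hC'⟩ := exists_reflTransGen_add_le (C := C) hadj (2 ^ p.length) (by omega)
    exact .of_reflTransGen hsteps (ih (C := C') (by omega))

theorem exists_le_sum_eq [Fintype V] (C : V → ℕ) {t : ℕ} (ht : t ≤ ∑ x, C x) :
    ∃ C' ≤ C, ∑ x, C' x = t := by
  obtain ⟨f, hf, hsum⟩ := Finsupp.exists_le_degree_eq (Finsupp.equivFunOnFinite.symm C) t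
    (by rwa [Finsupp.degree_eq_sum])
  exact ⟨f, fun x => hf x, by rwa [Finsupp.degree_eq_sum] at hsum⟩

variable [Fintype V]

theorem solvable_of_card_mul_two_pow_le (hconn : G.Connected)
    (hC : Fintype.card V * 2 ^ Fintype.card V ≤ ∑ x, C x) : Solvable G C r := by
  classical
  obtain ⟨x, -, hx⟩ := Finset.exists_le_of_sum_le ⟨r, Finset.mem_univ r⟩
    (f := fun _ => 2 ^ Fintype.card V) (by simpa using hC)
  let p := (hconn x r).some.toPath
  exact solvable_of_walk (p : G.Walk x r)
    ((Nat.pow_le_pow_right two_pos p.2.length_lt.le).trans hx)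

theorem Solvable.of_pebblingNumberTo_le (hconn : G.Connected)
    (hC : pebblingNumberTo G r ≤ ∑ x, C x) : Solvable G C r := by
  have hne : {t | ∀ C : V → ℕ, ∑ x, C x = t → Solvable G C r}.Nonempty :=
    ⟨_, fun _ hC => solvable_of_card_mul_two_pow_le hconn hC.ge⟩
  obtain ⟨C', hle, hsum⟩ := exists_le_sum_eq C hC
  exact (Nat.sInf_mem hne C' hsum).mono hle

theorem sum_lt_pebblingNumber_of_not_solvable (hconn : G.Connected) (h : ¬ Solvable G C r) :
    ∑ x, C x < pebblingNumber G :=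
  calc ∑ x, C x < pebblingNumberTo G r :=
        lt_of_not_ge fun hle => h (.of_pebblingNumberTo_le hconn hle)
    _ ≤ pebblingNumber G := Finset.le_sup (f := fun r => pebblingNumberTo G r) (Finset.mem_univ r)

end Basic

section Potential

variable [Fintype V] {G : SimpleGraph V} {g : V → ℕ} {O : Set V} {C C' : V → ℕ} {r : V}

/-- Truncated subtraction makes the first pebble on each vertex of `O` weigh nothing. -/
noncomputable def potential (g : V → ℕ) (O : Set V) (C : V → ℕ) : ℕ :=
  ∑ x, (C x - O.indicator 1 x) * 2 ^ g x

structure IsPebblingWeight (G : SimpleGraph V) (g : V → ℕ) (O : Set V) : Prop where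
  le_add_one : ∀ ⦃z x⦄, G.Adj z x → g x ≤ g z + 1
  le_of_mem : ∀ ⦃z x⦄, G.Adj z x → z ∈ O → g x ≤ g z

theorem IsPebblingWeight.potential_le_of_move (hw : IsPebblingWeight G g O) (h : Move G C C') :
    potential g O C' ≤ potential g O C := by
  classical
  obtain ⟨z, x, hadj, hz, rfl⟩ := move_iff.mp h
  suffices hpt : ∀ y, (Function.update (Function.update C z (C z - 2)) x (C x + 1) y
      - O.indicator 1 y) * 2 ^ g y + (Pi.single z (2 ^ g x) : V → ℕ) y
      ≤ (C y - O.indicator 1 y) * 2 ^ g y + (Pi.single x (2 ^ g x) : V → ℕ) y by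
    have := Finset.sum_le_sum fun y (_ : y ∈ Finset.univ) => hpt y
    simpa [Finset.sum_add_distrib, potential] using this
  intro y
  rcases eq_or_ne y x with rfl | hyx
  · rw [Function.update_self, Pi.single_eq_of_ne hadj.ne', Pi.single_eq_same, add_zero]
    calc (C y + 1 - O.indicator 1 y) * 2 ^ g y
        ≤ (C y - O.indicator 1 y + 1) * 2 ^ g y := by gcongr; omega
      _ = _ := by ring
  rcases eq_or_ne y z with rfl | hyz
  · rw [Function.update_of_ne hyx, Function.update_self, Pi.single_eq_same,
      Pi.single_eq_of_ne hyx, add_zero]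
    by_cases hyO : y ∈ O
    · rw [Set.indicator_of_mem hyO, Pi.one_apply]
      have hpow : 2 ^ g x ≤ 2 ^ g y := Nat.pow_le_pow_right two_pos (hw.le_of_mem hadj hyO)
      calc (C y - 2 - 1) * 2 ^ g y + 2 ^ g x ≤ (C y - 2 - 1 + 1) * 2 ^ g y := by
            rw [add_one_mul]; omega
        _ ≤ (C y - 1) * 2 ^ g y := by gcongr; omega
    · rw [Set.indicator_of_notMem hyO]
      have hpow : 2 ^ g x ≤ 2 * 2 ^ g y := by
        rw [← pow_succ']; exact Nat.pow_le_pow_right two_pos (hw.le_add_one hadj)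
      calc (C y - 2 - 0) * 2 ^ g y + 2 ^ g x ≤ (C y - 2 + 2) * 2 ^ g y := by
            rw [add_mul, Nat.sub_zero]; omega
        _ = (C y - 0) * 2 ^ g y := by congr 1; omega
  · rw [Function.update_of_ne hyx, Function.update_of_ne hyz, Pi.single_eq_of_ne hyz,
      Pi.single_eq_of_ne hyx]

theorem IsPebblingWeight.potential_le_of_reflTransGen (hw : IsPebblingWeight G g O)
    (h : Relation.ReflTransGen (Move G) C C') : potential g O C' ≤ potential g O C := by
  induction h with
  | refl => exact le_rfl
  | tail _ hmove ih => exact (hw.potential_le_of_move hmove).trans ih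

theorem IsPebblingWeight.two_pow_le_potential (hw : IsPebblingWeight G g O) (hr : r ∉ O)
    (h : Solvable G C r) : 2 ^ g r ≤ potential g O C := by
  obtain ⟨C', hsteps, hC'⟩ := h
  calc 2 ^ g r ≤ (C' r - O.indicator 1 r) * 2 ^ g r := by
        rw [Set.indicator_of_notMem hr, Nat.sub_zero]; exact Nat.le_mul_of_pos_left _ hC'
    _ ≤ potential g O C' :=
        Finset.single_le_sum (f := fun x => (C' x - O.indicator 1 x) * 2 ^ g x)
          (fun _ _ => Nat.zero_le _) (Finset.mem_univ r)
    _ ≤ potential g O C := hw.potential_le_of_reflTransGen hsteps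

theorem potential_indicator_add_single [DecidableEq V] (g : V → ℕ) (O : Set V) (v : V) (k : ℕ) :
    potential g O (O.indicator 1 + Pi.single v k) = k * 2 ^ g v := by
  simp [potential, Pi.single_apply]

end Potential

theorem card_le_sum_indicator_compl_add_single [Fintype V] [DecidableEq V] {N : Set V} {k : ℕ}
    (hk : N.ncard ≤ k) (v : V) :
    Fintype.card V ≤ ∑ x, (Nᶜ.indicator 1 + Pi.single v k : V → ℕ) x := by
  classical
  have hcompl : ∑ x, Nᶜ.indicator (1 : V → ℕ) x = Nᶜ.ncard := by
    rw [Set.ncard_eq_toFinset_card', ← Set.filter_mem_univ_eq_toFinset, Finset.card_filter]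
    simp only [Set.indicator_apply, Pi.one_apply]
  have hcard := Set.ncard_add_ncard_compl N
  rw [Nat.card_eq_fintype_card] at hcard
  simp only [Pi.add_apply, Finset.sum_add_distrib, Finset.sum_pi_single', Finset.mem_univ,
    if_true, hcompl]
  omega

section Neighborhoods

variable {G : SimpleGraph V} {u v : V} {a b : ℕ}

noncomputable def nbhdLevel (G : SimpleGraph V) (u v : V) (a b : ℕ) (x : V) : ℕ :=
  min (G.dist v x) (b + 1) + (a - G.dist u x)

theorem isPebblingWeight_nbhdLevel (hdisj : ∀ x, G.dist u x ≤ a → b < G.dist v x) :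
    IsPebblingWeight G (nbhdLevel G u v a b) ({x | G.dist u x ≤ a} ∪ {x | G.dist v x ≤ b})ᶜ where
  le_add_one z x hadj := by
    have hv := hadj.diff_dist_adj (u := v)
    have hu := hadj.symm.diff_dist_adj (u := u)
    have := hdisj z
    unfold nbhdLevel
    omega
  le_of_mem z x hadj hz := by
    simp only [Set.mem_compl_iff, Set.mem_union, Set.mem_ofPred_eq, not_or, not_le] at hz
    have hu := hadj.symm.diff_dist_adj (u := u)
    unfold nbhdLevel
    omega

theorem not_solvable_indicator_compl_add_single [Fintype V] [DecidableEq V]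
    (hdisj : ∀ x, G.dist u x ≤ a → b < G.dist v x) :
    ¬ Solvable G (({x | G.dist u x ≤ a} ∪ {x | G.dist v x ≤ b})ᶜ.indicator 1
      + Pi.single v (2 ^ (a + b + 1) - 1)) u := by
  intro h
  have hvu : b < G.dist v u := hdisj u (by simp)
  have huv : a < G.dist u v := not_le.mp fun huv => by simpa using hdisj v huv
  have hlevel := (isPebblingWeight_nbhdLevel hdisj).two_pow_le_potential (by simp) h
  rw [potential_indicator_add_single] at hlevel
  rw [nbhdLevel, nbhdLevel, SimpleGraph.dist_self, SimpleGraph.dist_self, min_eq_right hvu,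
    Nat.zero_min, Nat.sub_eq_zero_of_le huv.le, pow_zero, mul_one, Nat.sub_zero,
    show b + 1 + a = a + b + 1 by ring] at hlevel
  exact absurd hlevel (Nat.not_le.mpr (Nat.sub_lt (Nat.two_pow_pos _) one_pos))

end Neighborhoods

/-- if N_a[u] and N_b[v] are disjoint and |N_a[u] ∪ N_b[v]| < 2^(a+b+1),
then G is not Class 0, i.e. π(G) > n(G). -/
theorem small_neighborhoods_not_class0
    {V : Type*} [Fintype V] (G : SimpleGraph V)
    (hconn : G.Connected) (u v : V) (a b : ℕ)
    (hdisj : {x | G.dist u x ≤ a} ∩ {x | G.dist v x ≤ b} = ∅)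
    (hcard : ({x | G.dist u x ≤ a} ∪ {x | G.dist v x ≤ b}).ncard < 2 ^ (a + b + 1)) :
    Fintype.card V < pebblingNumber G := by
  classical
  have hdisj' : ∀ x, G.dist u x ≤ a → b < G.dist v x := fun x hu =>
    not_le.mp fun hv => (Set.eq_empty_iff_forall_notMem.mp hdisj) x ⟨hu, hv⟩
  exact (card_le_sum_indicator_compl_add_single (Nat.le_sub_one_of_lt hcard) v).trans_lt
    (sum_lt_pebblingNumber_of_not_solvable hconn (not_solvable_indicator_compl_add_single hdisj'))

end Pebbling
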